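/- arXiv:1812.07312 — 7 statements merged into one kernel-verified Lean document; each statement's English description precedes it below -/
import Mathlib

section
/- Let θ, a, b ∈ ℝ^m with a·θ > b·θ, and let F be the set of all implementable-with-payments allocation rules f : ℝ^m → {a, b}. Then the harmless set is H(θ, F) = {θ} ∪ {θ' ∈ ℝ^m : (a − b)·θ' < (a − b)·θ}. In particular, H(θ, F) equals the harmless set of a single critical allocation rule whose decision hyperplane {θ' : (a−b)·θ' = (a−b)·θ} passes through θ. -/
open Matrix BigOperators

/-- An allocation rule is implementable-with-payments if there is a payment rule
making truthful reporting optimal. -/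
def Implementable {m : ℕ} (f : (Fin m → ℝ) → (Fin m → ℝ)) : Prop :=
  ∃ p : (Fin m → ℝ) → ℝ, ∀ θ θ' : Fin m → ℝ, f θ ⬝ᵥ θ - p θ ≥ f θ' ⬝ᵥ θ - p θ'

/-!
Monotonicity of implementable rules, `(f θ' - f θ) ⬝ᵥ (θ' - θ) ≥ 0`, shows that no implementable
rule into `{a, b}` can switch from `b` at `θ` to `a` at a type strictly below the hyperplane
`(a - b) ⬝ᵥ θ' = (a - b) ⬝ᵥ θ`, so such types are harmless. Conversely, any other `θ' ≠ θ` is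
harmed by the threshold rule choosing `a` exactly above that hyperplane and at `θ'`: with the
payment `(a - b) ⬝ᵥ θ` charged for `a`, it is implementable, and it gives `b` to `θ`.
-/

namespace Implementable

variable {m : ℕ} {f : (Fin m → ℝ) → (Fin m → ℝ)}

theorem sub_dotProduct_sub_nonneg (hf : Implementable f) (x y : Fin m → ℝ) :
    0 ≤ (f x - f y) ⬝ᵥ (x - y) := by
  obtain ⟨p, hp⟩ := hf
  have hxy := hp x y
  have hyx := hp y x
  simp only [sub_dotProduct, dotProduct_sub]
  linarith

theorem dotProduct_le_of_apply_eq {a b x y : Fin m → ℝ} (hf : Implementable f)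
    (hx : f x = b) (hy : f y = a) : (a - b) ⬝ᵥ x ≤ (a - b) ⬝ᵥ y := by
  have := hf.sub_dotProduct_sub_nonneg y x
  rw [hx, hy, dotProduct_sub] at this
  linarith

end Implementable

theorem implementable_piecewise {m : ℕ} {a b : Fin m → ℝ} {t : ℝ} (S : Set (Fin m → ℝ))
    [DecidablePred (· ∈ S)] (hS : ∀ x ∈ S, t ≤ (a - b) ⬝ᵥ x) (hSc : ∀ x ∉ S, (a - b) ⬝ᵥ x ≤ t) :
    Implementable (S.piecewise (fun _ => a) fun _ => b) := by
  refine ⟨S.piecewise (fun _ => t) fun _ => 0, fun x y => ?_⟩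
  by_cases hx : x ∈ S <;> by_cases hy : y ∈ S <;>
    simp only [Set.piecewise, hx, hy, if_true, if_false, ge_iff_le, le_refl]
  · linarith [hS x hx, sub_dotProduct a b x]
  · linarith [hSc x hx, sub_dotProduct a b x]

/-- Lemma 1 / Corollary 1 (two allocations): when `θ` strictly prefers `a` to `b`,
the harmless set of all implementable-with-payments rules into `{a, b}` consists of
`θ` itself together with the open half-space below the critical allocation
hyperplane through `θ`. -/
theorem harmless_two_allocations {m : ℕ} (θ a b : Fin m → ℝ) (h : a ⬝ᵥ θ > b ⬝ᵥ θ) :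
    {θ' : Fin m → ℝ | ∀ f : (Fin m → ℝ) → (Fin m → ℝ),
        (∀ x, f x = a ∨ f x = b) → Implementable f → f θ ⬝ᵥ θ ≥ f θ' ⬝ᵥ θ} =
      {θ} ∪ {θ' : Fin m → ℝ | (a - b) ⬝ᵥ θ' < (a - b) ⬝ᵥ θ} := by
  classical
  ext θ'
  simp only [Set.mem_ofPred_eq, Set.mem_union, Set.mem_singleton_iff]
  constructor
  · intro hH
    by_contra! ⟨hne, hge⟩
    let S := {x | (a - b) ⬝ᵥ θ < (a - b) ⬝ᵥ x} ∪ {θ'}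
    have hθ : θ ∉ S := by simpa [S] using hne.symm
    have hθ' : θ' ∈ S := Or.inr rfl
    have hS : ∀ x ∈ S, (a - b) ⬝ᵥ θ ≤ (a - b) ⬝ᵥ x := by
      rintro x (hx | rfl)
      exacts [le_of_lt hx, hge]
    have hSc : ∀ x ∉ S, (a - b) ⬝ᵥ x ≤ (a - b) ⬝ᵥ θ := fun x hx =>
      not_lt.mp fun hlt => hx (Or.inl hlt)
    have hharm := hH _ (fun x => by by_cases hx : x ∈ S <;> simp [hx])
      (implementable_piecewise S hS hSc)
    rw [S.piecewise_eq_of_notMem _ _ hθ, S.piecewise_eq_of_mem _ _ hθ'] at hharm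
    linarith
  · rintro (rfl | hlt) f hf himp
    · exact le_rfl
    rcases hf θ with hθ | hθ <;> rcases hf θ' with hθ' | hθ' <;> rw [hθ, hθ']
    · linarith
    · exact absurd (himp.dotProduct_le_of_apply_eq hθ hθ') (not_le.mpr hlt)
end

section
/- Let A ⊆ ℝ^m and θ ∈ ℝ^m. Let F be the set of all implementable-with-payments allocation rules f : ℝ^m → A, and let F₂ ⊆ F be the subset of those rules whose range is contained in a two-element subset of A. Then H(θ, F) = H(θ, F₂): a type is harmless for all implementable-with-payments rules into A if and only if it is harmless for all such rules using at most two allocations. -/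
open Matrix BigOperators

theorem implementable_ite {m : ℕ} {a b : Fin m → ℝ} {p q : ℝ} (C : (Fin m → ℝ) → Prop)
    [DecidablePred C] (hC : ∀ x, C x → b ⬝ᵥ x - q ≤ a ⬝ᵥ x - p)
    (hnC : ∀ x, ¬ C x → a ⬝ᵥ x - p ≤ b ⬝ᵥ x - q) :
    Implementable fun x => if C x then a else b := by
  refine ⟨fun x => if C x then p else q, fun x y => ?_⟩
  by_cases hx : C x <;> by_cases hy : C y <;> simp only [hx, hy, if_true, if_false, ge_iff_le]
  exacts [le_rfl, hC x hx, hnC x hx, le_rfl]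

/-- Witness: the menu `{(f θ, p θ), (f θ', p θ')}`, in which `θ` breaks its ties towards `f θ`
and every other type towards `f θ'`. -/
theorem Implementable.exists_twoValued_agree {m : ℕ} {f : (Fin m → ℝ) → (Fin m → ℝ)}
    (hf : Implementable f) (θ θ' : Fin m → ℝ) :
    ∃ g : (Fin m → ℝ) → (Fin m → ℝ), Implementable g ∧ (∀ x, g x = f θ ∨ g x = f θ') ∧
      g θ = f θ ∧ g θ' = f θ' := by
  classical
  obtain ⟨p, hp⟩ := hf
  let C x := f θ' ⬝ᵥ x - p θ' < f θ ⬝ᵥ x - p θ ∨ x = θ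
  have hgθ' : (if C θ' then f θ else f θ') = f θ' := by
    rcases eq_or_ne θ' θ with rfl | hne
    · exact if_pos (Or.inr rfl)
    refine if_neg ?_
    rintro (hlt | rfl)
    exacts [(hp θ' θ).not_gt hlt, hne rfl]
  refine ⟨fun x => if C x then f θ else f θ', implementable_ite (p := p θ) (q := p θ') C ?_ ?_,
    fun x => by by_cases hx : C x <;> simp [hx], if_pos (Or.inr rfl), hgθ'⟩
  · rintro x (hlt | rfl)
    exacts [hlt.le, hp x θ']
  · intro x hx
    exact not_lt.mp fun hlt => hx (Or.inl hlt)

/-- Theorem 1: the harmless set for all implementable-with-payments rules into `A`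
equals the harmless set for the subset of such rules whose range is contained in a
two-element subset of `A`. -/
theorem harmless_all_eq_harmless_pairs {m : ℕ} (A : Set (Fin m → ℝ)) (θ : Fin m → ℝ) :
    {θ' : Fin m → ℝ | ∀ f : (Fin m → ℝ) → (Fin m → ℝ),
        (∀ x, f x ∈ A) → Implementable f → f θ ⬝ᵥ θ ≥ f θ' ⬝ᵥ θ} =
    {θ' : Fin m → ℝ | ∀ f : (Fin m → ℝ) → (Fin m → ℝ),
        (∀ x, f x ∈ A) → Implementable f →
        (∃ a ∈ A, ∃ b ∈ A, ∀ x, f x = a ∨ f x = b) →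
        f θ ⬝ᵥ θ ≥ f θ' ⬝ᵥ θ} := by
  refine Set.Subset.antisymm (fun θ' h f hA hf _ => h f hA hf) fun θ' h f hA hf => ?_
  obtain ⟨g, hg, hgf, hgθ, hgθ'⟩ := hf.exists_twoValued_agree θ θ'
  have hgA : ∀ x, g x ∈ A := fun x => (hgf x).elim (· ▸ hA θ) (· ▸ hA θ')
  simpa only [hgθ, hgθ'] using h g hgA hg ⟨f θ, hA θ, f θ', hA θ', hgf⟩
end

section
/- Let A ⊆ ℝ^m and let f : ℝ^m → A be implementable-with-payments. Then for any two types θ, θ' ∈ ℝ^m there exists an implementable-with-payments rule g : ℝ^m → {f(θ), f(θ')} whose range is contained in the pair {f(θ), f(θ')} and which satisfies g(θ) = f(θ) and g(θ') = f(θ'). -/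
/-!
Fix payments `p` implementing `f`. Offering an agent only the reports in a finite set `S` of
types, and letting each type pick its favourite among them, is again incentive compatible: every
type obtains the best of the menu `{(f y, p y) | y ∈ S}`. Types in `S` may keep their own report,
since truthfulness already makes it a best choice; with `S = {θ, θ'}` this restricted rule takes
only the values `f θ`, `f θ'` and agrees with `f` at `θ` and `θ'`.
-/

open Matrix BigOperators

section RestrictedMenu

variable {m : ℕ} {f : (Fin m → ℝ) → (Fin m → ℝ)} {p : (Fin m → ℝ) → ℝ}
  {S : Set (Fin m → ℝ)}

theorem implementable_comp_of_isMaxOn {c : (Fin m → ℝ) → (Fin m → ℝ)} (hcS : ∀ x, c x ∈ S)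
    (hc : ∀ x, IsMaxOn (fun y => f y ⬝ᵥ x - p y) S (c x)) : Implementable (f ∘ c) :=
  ⟨p ∘ c, fun x y => isMaxOn_iff.1 (hc x) (c y) (hcS y)⟩

theorem exists_truthful_best_report
    (hp : ∀ θ θ' : Fin m → ℝ, f θ ⬝ᵥ θ - p θ ≥ f θ' ⬝ᵥ θ - p θ')
    (hfin : S.Finite) (hne : S.Nonempty) :
    ∃ c : (Fin m → ℝ) → (Fin m → ℝ), (∀ x, c x ∈ S) ∧
      (∀ x, IsMaxOn (fun y => f y ⬝ᵥ x - p y) S (c x)) ∧ ∀ x ∈ S, c x = x := by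
  have best : ∀ x, ∃ y ∈ S, IsMaxOn (fun y => f y ⬝ᵥ x - p y) S y ∧ (x ∈ S → y = x) := by
    intro x
    by_cases hx : x ∈ S
    · exact ⟨x, hx, isMaxOn_iff.2 fun y _ => hp x y, fun _ => rfl⟩
    · obtain ⟨y, hy, hmax⟩ := S.exists_max_image (fun y => f y ⬝ᵥ x - p y) hfin hne
      exact ⟨y, hy, isMaxOn_iff.2 hmax, fun h => absurd h hx⟩
  choose c hcS hmax hfix using best
  exact ⟨c, hcS, hmax, hfix⟩

end RestrictedMenu

theorem restrict_to_two_allocations_general {m : ℕ}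
    (f : (Fin m → ℝ) → (Fin m → ℝ)) (hf : Implementable f)
    (θ θ' : Fin m → ℝ) :
    ∃ g : (Fin m → ℝ) → (Fin m → ℝ), Implementable g ∧
      (∀ x, g x = f θ ∨ g x = f θ') ∧ g θ = f θ ∧ g θ' = f θ' := by
  obtain ⟨p, hp⟩ := hf
  obtain ⟨c, hcS, hcmax, hcfix⟩ :=
    exists_truthful_best_report (S := {θ, θ'}) hp (Set.toFinite _) (Set.insert_nonempty _ _)
  refine ⟨f ∘ c, implementable_comp_of_isMaxOn hcS hcmax, fun x => ?_, ?_, ?_⟩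
  · obtain h | h : c x = θ ∨ c x = θ' := hcS x <;> simp [h]
  · simp [hcfix θ (by simp)]
  · simp [hcfix θ' (by simp)]

/-- Restriction lemma (from the proof of Theorem 1): an implementable rule into `A`
can be restricted to the two allocations `f θ`, `f θ'` while preserving its values
at `θ` and `θ'` and remaining implementable-with-payments. -/
theorem restrict_to_two_allocations {m : ℕ} (A : Set (Fin m → ℝ))
    (f : (Fin m → ℝ) → (Fin m → ℝ)) (hfA : ∀ x, f x ∈ A) (hf : Implementable f)
    (θ θ' : Fin m → ℝ) :
    ∃ g : (Fin m → ℝ) → (Fin m → ℝ), Implementable g ∧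
      (∀ x, g x = f θ ∨ g x = f θ') ∧ g θ = f θ ∧ g θ' = f θ' :=
  restrict_to_two_allocations_general f hf θ θ'
end

section
/- Let F_d be the set of all implementable-with-payments rules f : ℝ^m → {e₁, …, e_m} (deterministic truthful mechanisms), and let F_u be the set of all functions g : ℝ^m → ℝ^m expressible as a finite convex combination g = Σ_{k=1}^{K} α_k f_k with α_k ≥ 0, Σ_k α_k = 1, and each f_k ∈ F_d (allocation rules of universally truthful mechanisms). Then for every θ ∈ ℝ^m, H(θ, F_u) = H(θ, F_d): the harmless set of all universally truthful mechanisms equals the harmless set of all deterministic truthful mechanisms. -/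
open Matrix BigOperators

/-- A deterministic truthful allocation rule: implementable-with-payments and
always allocating a standard basis vector. -/
def DetTruthful {m : ℕ} (f : (Fin m → ℝ) → (Fin m → ℝ)) : Prop :=
  (∀ x, ∃ i : Fin m, f x = Pi.single i (1 : ℝ)) ∧ Implementable f

/-! The value `g θ' ⬝ᵥ θ` is linear in the rule `g`, so an inequality `g θ' ⬝ᵥ θ ≤ g θ ⬝ᵥ θ`
holding for every deterministic rule survives nonnegative combinations; conversely every
deterministic rule is the trivial convex combination of itself. -/

theorem sum_smul_dotProduct_le_sum_smul_dotProduct {R ι n : Type*} [CommSemiring R]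
    [PartialOrder R] [IsOrderedRing R] [Fintype n] (s : Finset ι) (α : ι → R)
    (u v : ι → n → R) (w : n → R) (hα : ∀ k ∈ s, 0 ≤ α k)
    (h : ∀ k ∈ s, v k ⬝ᵥ w ≤ u k ⬝ᵥ w) :
    (∑ k ∈ s, α k • v k) ⬝ᵥ w ≤ (∑ k ∈ s, α k • u k) ⬝ᵥ w := by
  simp only [sum_dotProduct, smul_dotProduct, smul_eq_mul]
  exact Finset.sum_le_sum fun k hk => mul_le_mul_of_nonneg_left (h k hk) (hα k hk)

/-- Theorem 3: the harmless set of all universally truthful mechanisms (finite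
convex combinations of deterministic truthful rules) equals the harmless set of
all deterministic truthful mechanisms. -/
theorem harmless_universally_truthful_eq_deterministic {m : ℕ} (θ : Fin m → ℝ) :
    {θ' : Fin m → ℝ | ∀ (K : ℕ) (α : Fin K → ℝ)
        (f : Fin K → ((Fin m → ℝ) → (Fin m → ℝ))),
        (∀ k, 0 ≤ α k) → (∑ k, α k) = 1 → (∀ k, DetTruthful (f k)) →
        (∑ k, α k • f k θ) ⬝ᵥ θ ≥ (∑ k, α k • f k θ') ⬝ᵥ θ} =
    {θ' : Fin m → ℝ | ∀ f : (Fin m → ℝ) → (Fin m → ℝ),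
        DetTruthful f → f θ ⬝ᵥ θ ≥ f θ' ⬝ᵥ θ} := by
  ext θ'
  constructor
  · intro h f hf
    simpa using h 1 (fun _ => 1) (fun _ => f) (fun _ => zero_le_one) (by simp) (fun _ => hf)
  · intro h K α f hα _ hf
    exact sum_smul_dotProduct_le_sum_smul_dotProduct _ α _ _ θ
      (fun k _ => hα k) (fun k _ => h (f k) (hf k))
end

section
/- Consider a single unit-demand agent and two items, with type space Θ = {θ ∈ ℝ² : θ₁ ≥ 0, θ₂ ≥ 0} and allocation set A = {(0,0), (1,0), (0,1)} ⊆ ℝ² (get nothing, item 1, or item 2). Let F be the set of all implementable-with-payments rules f : Θ → A, and let F_sa ⊆ F be the set of rules f for which there exist prices p₁ ≥ 0, p₂ ≥ 0 such that, setting P((0,0)) = 0, P((1,0)) = p₁, P((0,1)) = p₂, every θ' ∈ Θ receives a utility-maximizing allocation at these prices: f(θ')·θ' − P(f(θ')) ≥ a·θ' − P(a) for every a ∈ A (rules arising from the VCG mechanism for some profile of other agents' reports). Then for every θ ∈ Θ, H(θ, F) = H(θ, F_sa). -/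
open Matrix BigOperators

/-- Type space of a unit-demand agent over two items: the nonnegative orthant. -/
def typeSpace : Set (Fin 2 → ℝ) := {θ | 0 ≤ θ 0 ∧ 0 ≤ θ 1}

/-- Allocations: receive nothing, item 1, or item 2. -/
def allocSet : Set (Fin 2 → ℝ) := {![0, 0], ![1, 0], ![0, 1]}

/-- Implementability-with-payments on the type space `typeSpace`. -/
def ImplementableOn (f : (Fin 2 → ℝ) → (Fin 2 → ℝ)) : Prop :=
  ∃ p : (Fin 2 → ℝ) → ℝ, ∀ θ ∈ typeSpace, ∀ θ' ∈ typeSpace,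
    f θ ⬝ᵥ θ - p θ ≥ f θ' ⬝ᵥ θ - p θ'

/-- A rule arising from VCG for some profile of the other agents' reports: there
are item prices `p₁, p₂ ≥ 0` (with the null allocation priced at `0`, so the price
of allocation `a` is `a ⬝ᵥ ![p₁, p₂]`) such that every type receives a
utility-maximizing allocation at these prices. -/
def VCGInduced (f : (Fin 2 → ℝ) → (Fin 2 → ℝ)) : Prop :=
  ∃ p₁ p₂ : ℝ, 0 ≤ p₁ ∧ 0 ≤ p₂ ∧ ∀ θ' ∈ typeSpace, ∀ a ∈ allocSet,
    f θ' ⬝ᵥ θ' - f θ' ⬝ᵥ ![p₁, p₂] ≥ a ⬝ᵥ θ' - a ⬝ᵥ ![p₁, p₂]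

/-!
If an implementable rule `f` harms `θ` at `θ'`, i.e. `a := f θ` and `a' := f θ'` satisfy
`a ⬝ᵥ θ < a' ⬝ᵥ θ`, then weak monotonicity `(a' - a) ⬝ᵥ θ ≤ (a' - a) ⬝ᵥ θ'` lets us post
nonnegative item prices at which `θ` demands `a` and `θ'` demands `a'`. A selection from the
demand at these prices that takes the values `a` at `θ` and `a'` at `θ'` is VCG-induced,
implementable with the prices as payments, and harms `θ` at `θ'` in the same way.
-/

def IsDemanded (q x a : Fin 2 → ℝ) : Prop :=
  a ∈ allocSet ∧ ∀ b ∈ allocSet, b ⬝ᵥ x - b ⬝ᵥ q ≤ a ⬝ᵥ x - a ⬝ᵥ q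

lemma forall_mem_allocSet {P : (Fin 2 → ℝ) → Prop} :
    (∀ a ∈ allocSet, P a) ↔ P ![0, 0] ∧ P ![1, 0] ∧ P ![0, 1] := by
  simp [allocSet]

lemma exists_isDemanded (q x : Fin 2 → ℝ) : ∃ a, IsDemanded q x a :=
  (allocSet.exists_max_image (fun a ↦ a ⬝ᵥ x - a ⬝ᵥ q)
    (Set.toFinite {![0, 0], ![1, 0], ![0, 1]}) ⟨_, Or.inl rfl⟩).imp fun _ ↦ id

lemma ImplementableOn.dotProduct_sub_le {f : (Fin 2 → ℝ) → (Fin 2 → ℝ)} (hf : ImplementableOn f)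
    {θ θ' : Fin 2 → ℝ} (hθ : θ ∈ typeSpace) (hθ' : θ' ∈ typeSpace) :
    f θ' ⬝ᵥ θ - f θ ⬝ᵥ θ ≤ f θ' ⬝ᵥ θ' - f θ ⬝ᵥ θ' := by
  obtain ⟨p, hp⟩ := hf
  linarith [hp θ hθ θ' hθ', hp θ' hθ' θ hθ]

lemma vcgInduced_of_isDemanded {f : (Fin 2 → ℝ) → (Fin 2 → ℝ)} {q : Fin 2 → ℝ} (hq : 0 ≤ q)
    (hf : ∀ x ∈ typeSpace, IsDemanded q x (f x)) : VCGInduced f := by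
  have hq_eq : ![q 0, q 1] = q := by ext i; fin_cases i <;> rfl
  exact ⟨q 0, q 1, hq 0, hq 1, fun x hx ↦ hq_eq ▸ (hf x hx).2⟩

lemma implementableOn_of_isDemanded {f : (Fin 2 → ℝ) → (Fin 2 → ℝ)} {q : Fin 2 → ℝ}
    (hf : ∀ x ∈ typeSpace, IsDemanded q x (f x)) : ImplementableOn f :=
  ⟨fun x ↦ f x ⬝ᵥ q, fun x hx y hy ↦ (hf x hx).2 (f y) (hf y hy).1⟩

lemma exists_isDemanded_extend {q θ θ' a a' : Fin 2 → ℝ} (hne : θ ≠ θ')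
    (ha : IsDemanded q θ a) (ha' : IsDemanded q θ' a') :
    ∃ f : (Fin 2 → ℝ) → (Fin 2 → ℝ), f θ = a ∧ f θ' = a' ∧ ∀ x, IsDemanded q x (f x) := by
  classical
  choose g hg using exists_isDemanded q
  refine ⟨Function.update (Function.update g θ a) θ' a', ?_, by simp, fun x ↦ ?_⟩
  · simp [Function.update_of_ne hne]
  · rcases eq_or_ne x θ' with rfl | hx'
    · simpa
    rcases eq_or_ne x θ with rfl | hx
    · simpa [Function.update_of_ne hx']
    · simpa [Function.update_of_ne hx', Function.update_of_ne hx] using hg x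

lemma exists_prices_isDemanded {θ θ' a a' : Fin 2 → ℝ} (hθ : θ ∈ typeSpace)
    (hθ' : θ' ∈ typeSpace) (ha : a ∈ allocSet) (ha' : a' ∈ allocSet)
    (hlt : a ⬝ᵥ θ < a' ⬝ᵥ θ) (hmono : a' ⬝ᵥ θ - a ⬝ᵥ θ ≤ a' ⬝ᵥ θ' - a ⬝ᵥ θ') :
    ∃ q, 0 ≤ q ∧ IsDemanded q θ a ∧ IsDemanded q θ' a' := by
  obtain ⟨h0, h1⟩ := hθ
  obtain ⟨h0', h1'⟩ := hθ'
  suffices ∃ q₁ q₂ : ℝ, 0 ≤ q₁ ∧ 0 ≤ q₂ ∧ IsDemanded ![q₁, q₂] θ a ∧ IsDemanded ![q₁, q₂] θ' a' by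
    obtain ⟨q₁, q₂, hq₁, hq₂, h⟩ := this
    exact ⟨![q₁, q₂], fun i ↦ by fin_cases i <;> assumption, h⟩
  simp only [IsDemanded, ha, ha', true_and, forall_mem_allocSet]
  simp only [allocSet, Set.mem_insert_iff, Set.mem_singleton_iff] at ha ha'
  rcases ha with rfl | rfl | rfl <;> rcases ha' with rfl | rfl | rfl <;>
    simp only [dotProduct, Fin.sum_univ_two, Matrix.cons_val_zero, Matrix.cons_val_one,
      zero_mul, one_mul, add_zero, zero_add] at hlt hmono ⊢
  all_goals try (exfalso; linarith)
  -- Make `θ` indifferent between `a` and `a'` and price the remaining item out of reach;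
  -- monotonicity then makes `θ'` weakly prefer `a'`.
  · exact ⟨θ 0, θ 1 + θ' 1, by and_intros <;> linarith⟩
  · exact ⟨θ 0 + θ' 0, θ 1, by and_intros <;> linarith⟩
  · exact ⟨0, θ 1 - θ 0, by and_intros <;> linarith⟩
  · exact ⟨θ 0 - θ 1, 0, by and_intros <;> linarith⟩

/-- Corollary 2: the harmless set of all implementable-with-payments rules into
`allocSet` equals the harmless set of the single-agent rules derived from VCG. -/
theorem harmless_VCG {θ : Fin 2 → ℝ} (hθ : θ ∈ typeSpace) :
    {θ' ∈ typeSpace | ∀ f : (Fin 2 → ℝ) → (Fin 2 → ℝ),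
        (∀ x ∈ typeSpace, f x ∈ allocSet) → ImplementableOn f →
        f θ ⬝ᵥ θ ≥ f θ' ⬝ᵥ θ} =
    {θ' ∈ typeSpace | ∀ f : (Fin 2 → ℝ) → (Fin 2 → ℝ),
        (∀ x ∈ typeSpace, f x ∈ allocSet) → ImplementableOn f → VCGInduced f →
        f θ ⬝ᵥ θ ≥ f θ' ⬝ᵥ θ} := by
  ext θ'
  refine ⟨fun ⟨hθ', h⟩ ↦ ⟨hθ', fun f hf hi _ ↦ h f hf hi⟩, fun ⟨hθ', h⟩ ↦ ⟨hθ', fun f hf hi ↦ ?_⟩⟩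
  by_contra! hlt
  have hne : θ ≠ θ' := by rintro rfl; exact hlt.false
  obtain ⟨q, hq, hθa, hθ'a⟩ := exists_prices_isDemanded hθ hθ' (hf θ hθ) (hf θ' hθ') hlt
    (hi.dotProduct_sub_le hθ hθ')
  obtain ⟨g, hgθ, hgθ', hg⟩ := exists_isDemanded_extend hne hθa hθ'a
  have hharm := h g (fun x _ ↦ (hg x).1) (implementableOn_of_isDemanded fun x _ ↦ hg x)
    (vcgInduced_of_isDemanded hq fun x _ ↦ hg x)
  rw [hgθ, hgθ'] at hharm
  exact hharm.not_gt hlt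
end

section
/- Let a, b ∈ ℝ^m and let f : ℝ^m → {a, b} be implementable-with-payments. Suppose a reported type θ' ∈ ℝ^m satisfies (a − b)·θ' ≥ 0 (θ' weakly prefers a) and f(θ') = b. Then the harmful set of θ' is empty: for every type θ̂ ∈ ℝ^m, f(θ̂)·θ̂ ≥ f(θ')·θ̂, i.e., no agent can strictly benefit by reporting θ'. -/
open Matrix BigOperators

/-- Two-cycle monotonicity: adding the incentive constraints of `θ` against `θ'` and of `θ'`
against `θ` cancels the payments. -/
theorem Implementable.sub_dotProduct_sub_nonneg_s12 {m : ℕ} {f : (Fin m → ℝ) → (Fin m → ℝ)}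
    (hf : Implementable f) (θ θ' : Fin m → ℝ) : 0 ≤ (f θ - f θ') ⬝ᵥ (θ - θ') := by
  obtain ⟨p, hp⟩ := hf
  have h₁ := hp θ θ'
  have h₂ := hp θ' θ
  simp only [sub_dotProduct, dotProduct_sub] at *
  linarith

/-- Case 2 of the reverse-approach analysis: if a report `θ'` weakly prefers `a`
but receives `b` under an implementable two-allocation rule, then its harmful set
is empty: no type can strictly benefit by reporting `θ'`. -/
theorem harmful_set_empty {m : ℕ} (a b : Fin m → ℝ)
    (f : (Fin m → ℝ) → (Fin m → ℝ)) (hrange : ∀ θ, f θ = a ∨ f θ = b)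
    (hf : Implementable f) (θ' : Fin m → ℝ)
    (hpref : (a - b) ⬝ᵥ θ' ≥ 0) (hfθ' : f θ' = b) :
    ∀ θhat : Fin m → ℝ, f θhat ⬝ᵥ θhat ≥ f θ' ⬝ᵥ θhat := by
  intro θhat
  rw [hfθ']
  rcases hrange θhat with ha | hb
  · have hmono : 0 ≤ (a - b) ⬝ᵥ (θhat - θ') := by
      simpa only [ha, hfθ'] using hf.sub_dotProduct_sub_nonneg_s12 θhat θ'
    rw [dotProduct_sub] at hmono
    have hgain : 0 ≤ (a - b) ⬝ᵥ θhat := by linarith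
    rw [sub_dotProduct] at hgain
    rw [ha]
    linarith
  · rw [hb]
end

section
/- Consider a single-minded bidder with one bundle: the type is a real number t (the value for the bundle), an allocation is a probability q ∈ [0, 1] of receiving the bundle, and an agent of type t reporting t' under rule q with payments p gets utility q(t')·t − p(t'). Let F be the set of all implementable-with-payments rules q : ℝ → [0, 1], i.e., those for which there exists p : ℝ → ℝ with q(t)·t − p(t) ≥ q(t')·t − p(t') for all t, t' ∈ ℝ. Then for every true value v > 0, the harmless set {t ∈ ℝ : q(v)·v ≥ q(t)·v for all q ∈ F} equals {t ∈ ℝ : t ≤ v}. That is, for 1-minded bidders the harmless reports are exactly the underbids, so verifying no overbidding suffices to implement every implementable-with-payments rule without money. -/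
/-- A single-minded allocation rule (a probability of receiving the bundle as a
function of the reported value) is implementable-with-payments if there is a
payment rule making truthful reporting optimal. -/
def Implementable1 (q : ℝ → ℝ) : Prop :=
  ∃ p : ℝ → ℝ, ∀ t t' : ℝ, q t * t - p t ≥ q t' * t - p t'

/-
Adding the incentive constraints of types `a` and `b` against each other gives
`(q b - q a) (b - a) ≥ 0`, so every implementable rule is monotone, and monotone
rules never make an underbid profitable when `v > 0`. Conversely, an overbid `t > v`
is harmful for the threshold rule at `t` (posted price `t`), which gives the bundle
to the report `t` but not to `v`.
-/

theorem Implementable1.monotone {q : ℝ → ℝ} (hq : Implementable1 q) : Monotone q := by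
  obtain ⟨p, hp⟩ := hq
  intro a b hab
  have hcross : 0 ≤ (q b - q a) * (b - a) := by linarith [hp a b, hp b a]
  rcases hab.lt_or_eq with hlt | rfl
  · exact sub_nonneg.mp (nonneg_of_mul_nonneg_left hcross (sub_pos.mpr hlt))
  · exact le_rfl

theorem indicator_Ici_one_mem_Icc (t s : ℝ) : (Set.Ici t).indicator 1 s ∈ Set.Icc (0 : ℝ) 1 := by
  by_cases hs : s ∈ Set.Ici t <;> simp [hs]

theorem implementable1_indicator_Ici (t : ℝ) : Implementable1 ((Set.Ici t).indicator 1) := by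
  refine ⟨fun s => t * (Set.Ici t).indicator 1 s, fun a s => ?_⟩
  by_cases ha : t ≤ a <;> by_cases hs : t ≤ s <;> simp [Set.indicator, ha, hs]
  -- the one case left: a type `a < t` that overbids to win pays `t > a`
  linarith

/-- For a 1-minded bidder with true value `v > 0`, the harmless reports for all
implementable-with-payments rules `q : ℝ → [0,1]` are exactly the underbids
`{t : t ≤ v}`. -/
theorem harmless_single_minded (v : ℝ) (hv : 0 < v) :
    {t : ℝ | ∀ q : ℝ → ℝ, (∀ s, q s ∈ Set.Icc (0 : ℝ) 1) → Implementable1 q →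
        q v * v ≥ q t * v} = {t : ℝ | t ≤ v} := by
  ext t
  simp only [Set.mem_ofPred_eq]
  constructor
  · intro hharmless
    by_contra! hvt
    have h := hharmless _ (indicator_Ici_one_mem_Icc t) (implementable1_indicator_Ici t)
    rw [Set.indicator_of_notMem (Set.notMem_Ici.mpr hvt), Set.indicator_of_mem Set.self_mem_Ici,
      Pi.one_apply, zero_mul, one_mul] at h
    linarith
  · intro htv q _ hq
    exact mul_le_mul_of_nonneg_right (hq.monotone htv) hv.le
end
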